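/- arXiv:2302.10857 — 2 statements merged into one kernel-verified Lean document; each statement's English description precedes it below -/
import Mathlib

section
/- Let D ⊆ ℂ be a bounded Jordan domain, z ∈ D, and let φ : 𝔻 → D be the conformal map with φ(0) = z and φ'(0) > 0. Suppose X ⊆ ∂D is nonempty and there exist δ, β ∈ (0,1) such that φ restricted to W = {w ∈ 𝔻 : dist(w, φ^{-1}(X)) < δ} is β-Hölder continuous. Fix a Whitney square decomposition 𝒲 of D and a square Q̃ ∈ 𝒲 containing z. Then for every a ∈ (0,1) there exists M > 0, depending only on a, β, δ, D, z, such that: whenever w ∈ X and the hyperbolic geodesic in D from z to w passes through a square Q ∈ 𝒲, the hyperbolic distance in D from cen(Q̃) to cen(Q) is at most M · len(Q)^{−a}. -/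
/-
Let `ψ = φ⁻¹ : D → 𝔻`, holomorphic as the inverse of an injective holomorphic map, and let
`u, v` be the preimages of the two centres. A `C¹` path from `u` through `0` to `v` gives
`d(u, v) ≤ -log (1 - |u|) - log (1 - |v|)`, so it suffices to bound `1 - |v|` from below.
If `φ p ∈ Q` with `p = tanh t • ζ`, the Schwarz lemma for `ψ` on the disk of radius
`dist(cen Q, ∂D) ≥ len Q` around `cen Q` makes `p` and `v` pseudo-hyperbolically `3/4`-close,
whence `1 - |p| ≤ (64/7) (1 - |v|)`. Since `φ ζ ∈ ∂D` while `φ p` is at distance `≥ len Q / 4`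
from `∂D`, Hölder continuity of `φ` on the segment `[p, ζ)` gives `len Q ≤ 4 C (1 - |p|)^β`
unless `1 - |p| ≥ δ`. Altogether `d(u, v) ≤ A + β⁻¹ log (K / len Q) ≤ M len(Q)^(-a)` for
constants `A, K` depending only on `u, δ, C` and `diam D`.
-/

open Complex Metric Set Filter Topology
open scoped NNReal

/-- The hyperbolic length of a curve `γ` over the parameter interval `[0,1]`, for the
hyperbolic metric `|dz| / (1 - |z|²)` on the unit disk. -/
noncomputable def hypLength (γ : ℝ → ℂ) : ℝ :=
  ∫ t in (0 : ℝ)..1, ‖deriv γ t‖ / (1 - ‖γ t‖ ^ 2)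

/-- The hyperbolic distance on the unit disk, defined as the infimum of the hyperbolic
lengths of `C¹` curves joining the two points inside the disk. -/
noncomputable def hypDistDisk (u v : ℂ) : ℝ :=
  sInf {L : ℝ | ∃ γ : ℝ → ℂ, ContDiffOn ℝ 1 γ (Set.Icc 0 1) ∧
    (∀ t ∈ Set.Icc (0 : ℝ) 1, γ t ∈ Metric.ball (0 : ℂ) 1) ∧
    γ 0 = u ∧ γ 1 = v ∧ L = hypLength γ}

/-- The closed axis-parallel square with center `c` and side length `l`. -/
def squareSet (c : ℂ) (l : ℝ) : Set ℂ :=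
  {w : ℂ | |w.re - c.re| ≤ l / 2 ∧ |w.im - c.im| ≤ l / 2}

/-- A Whitney square decomposition of an open set `D ⊆ ℂ`: a collection of squares
(encoded as center/side-length pairs) with pairwise disjoint interiors covering `D`, whose
side lengths are comparable to their distance to `∂D`. -/
structure IsWhitneyDecomposition (D : Set ℂ) (𝒲 : Set (ℂ × ℝ)) : Prop where
  len_pos : ∀ q ∈ 𝒲, 0 < q.2
  sq_subset : ∀ q ∈ 𝒲, squareSet q.1 q.2 ⊆ D
  covers : D ⊆ ⋃ q ∈ 𝒲, squareSet q.1 q.2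
  disj : ∀ q ∈ 𝒲, ∀ q' ∈ 𝒲, q ≠ q' →
    Disjoint (interior (squareSet q.1 q.2)) (interior (squareSet q'.1 q'.2))
  comparable : ∀ q ∈ 𝒲,
    q.2 ≤ Metric.infDist q.1 Dᶜ ∧ Metric.infDist q.1 Dᶜ ≤ 8 * q.2

lemma hypLength_nonneg {γ : ℝ → ℂ} (hγ : ∀ t ∈ Icc (0 : ℝ) 1, γ t ∈ ball (0 : ℂ) 1) :
    0 ≤ hypLength γ := by
  refine intervalIntegral.integral_nonneg zero_le_one fun t ht => div_nonneg (norm_nonneg _) ?_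
  have h := mem_ball_zero_iff.1 (hγ t ht)
  nlinarith [norm_nonneg (γ t)]

lemma hypDistDisk_le_hypLength {γ : ℝ → ℂ} (hγ : ContDiffOn ℝ 1 γ (Icc 0 1))
    (hγ_mem : ∀ t ∈ Icc (0 : ℝ) 1, γ t ∈ ball (0 : ℂ) 1) :
    hypDistDisk (γ 0) (γ 1) ≤ hypLength γ := by
  refine csInf_le ⟨0, ?_⟩ ⟨γ, hγ, hγ_mem, rfl, rfl, rfl⟩
  rintro _ ⟨γ', -, hγ'_mem, -, -, rfl⟩
  exact hypLength_nonneg hγ'_mem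

lemma deriv_eq_zero_of_nonneg_of_eq_zero {f : ℝ → ℝ} {t : ℝ} (hf : ∀ s, 0 ≤ f s)
    (ht : f t = 0) : deriv f t = 0 :=
  IsLocalMin.deriv_eq_zero (Eventually.of_forall fun s => ht ▸ hf s)

lemma norm_smul_div_one_sub_sq_le {r r' : ℝ} {u : ℂ} (hr0 : 0 ≤ r) (hr1 : r ≤ 1)
    (hu : ‖u‖ < 1) : ‖r' • u‖ / (1 - ‖r • u‖ ^ 2) ≤ |r'| * ‖u‖ / (1 - r * ‖u‖) := by
  have hru : r * ‖u‖ < 1 := by nlinarith [norm_nonneg u]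
  rw [norm_smul, norm_smul, Real.norm_eq_abs, Real.norm_eq_abs, abs_of_nonneg hr0]
  exact div_le_div_of_nonneg_left (by positivity) (by linarith)
    (by nlinarith [mul_nonneg hr0 (norm_nonneg u)])

section PathViaZero

open Real

noncomputable def fadeOut (t : ℝ) : ℝ := smoothTransition (1 - 2 * t)

lemma contDiff_fadeOut {n : ℕ∞} : ContDiff ℝ n fadeOut :=
  smoothTransition.contDiff.comp (contDiff_const.sub (contDiff_const.mul contDiff_id))

lemma antitone_fadeOut : Antitone fadeOut :=
  fun _ _ h => smoothTransition.monotone (by linarith)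

lemma fadeOut_nonneg (t : ℝ) : 0 ≤ fadeOut t := smoothTransition.nonneg _

lemma fadeOut_le_one (t : ℝ) : fadeOut t ≤ 1 := smoothTransition.le_one _

lemma fadeOut_zero : fadeOut 0 = 1 := smoothTransition.one_of_one_le (by norm_num)

lemma fadeOut_of_half_le {t : ℝ} (ht : 1 / 2 ≤ t) : fadeOut t = 0 :=
  smoothTransition.zero_of_nonpos (by linarith)

lemma deriv_fadeOut_of_half_le {t : ℝ} (ht : 1 / 2 ≤ t) : deriv fadeOut t = 0 :=
  deriv_eq_zero_of_nonneg_of_eq_zero fadeOut_nonneg (fadeOut_of_half_le ht)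

lemma hasDerivAt_fadeOut (t : ℝ) : HasDerivAt fadeOut (deriv fadeOut t) t :=
  ((contDiff_fadeOut (n := 1)).differentiable one_ne_zero t).hasDerivAt

/-- A `C¹` path from `u` to `v` through `0`, radial on `[0, 1/2]` and on `[1/2, 1]`. -/
noncomputable def pathViaZero (u v : ℂ) (t : ℝ) : ℂ := fadeOut t • u + fadeOut (1 - t) • v

variable {u v : ℂ}

lemma pathViaZero_zero : pathViaZero u v 0 = u := by
  simp [pathViaZero, fadeOut_zero, fadeOut_of_half_le (show (1 : ℝ) / 2 ≤ 1 by norm_num)]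

lemma pathViaZero_one : pathViaZero u v 1 = v := by
  simp [pathViaZero, fadeOut_zero, fadeOut_of_half_le (show (1 : ℝ) / 2 ≤ 1 by norm_num)]

lemma contDiff_pathViaZero {n : ℕ∞} : ContDiff ℝ n (pathViaZero u v) :=
  (contDiff_fadeOut.smul contDiff_const).add
    ((contDiff_fadeOut.comp (contDiff_const.sub contDiff_id)).smul contDiff_const)

lemma hasDerivAt_pathViaZero (t : ℝ) :
    HasDerivAt (pathViaZero u v) (deriv fadeOut t • u - deriv fadeOut (1 - t) • v) t := by
  have h := (hasDerivAt_fadeOut (1 - t)).comp t ((hasDerivAt_id t).const_sub 1)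
  exact (((hasDerivAt_fadeOut t).smul_const u).add (h.smul_const v)).congr_deriv
    (by simp [sub_eq_add_neg])

lemma pathViaZero_of_le_half {t : ℝ} (ht : t ≤ 1 / 2) :
    pathViaZero u v t = fadeOut t • u ∧
      deriv (pathViaZero u v) t = deriv fadeOut t • u := by
  have h : 1 / 2 ≤ 1 - t := by linarith
  simp [pathViaZero, (hasDerivAt_pathViaZero t).deriv, fadeOut_of_half_le h,
    deriv_fadeOut_of_half_le h]

lemma pathViaZero_of_half_le {t : ℝ} (ht : 1 / 2 ≤ t) :
    pathViaZero u v t = fadeOut (1 - t) • v ∧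
      deriv (pathViaZero u v) t = -(deriv fadeOut (1 - t) • v) := by
  simp [pathViaZero, (hasDerivAt_pathViaZero t).deriv, fadeOut_of_half_le ht,
    deriv_fadeOut_of_half_le ht]

lemma fadeOut_mul_norm_lt_one (hu : ‖u‖ < 1) (t : ℝ) : fadeOut t * ‖u‖ < 1 := by
  nlinarith [fadeOut_le_one t, fadeOut_nonneg t, norm_nonneg u]

lemma norm_pathViaZero_lt_one (hu : ‖u‖ < 1) (hv : ‖v‖ < 1) (t : ℝ) :
    ‖pathViaZero u v t‖ < 1 := by
  rcases le_total t (1 / 2) with ht | ht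
  · rw [(pathViaZero_of_le_half ht).1, norm_smul, Real.norm_of_nonneg (fadeOut_nonneg t)]
    exact fadeOut_mul_norm_lt_one hu t
  · rw [(pathViaZero_of_half_le ht).1, norm_smul, Real.norm_of_nonneg (fadeOut_nonneg _)]
    exact fadeOut_mul_norm_lt_one hv _

lemma hasDerivAt_log_one_sub_fadeOut_mul (hu : ‖u‖ < 1) (t : ℝ) :
    HasDerivAt (fun t => Real.log (1 - fadeOut t * ‖u‖))
      (-deriv fadeOut t * ‖u‖ / (1 - fadeOut t * ‖u‖)) t := by
  have h := (((hasDerivAt_fadeOut t).mul_const ‖u‖).const_sub 1).log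
    (sub_pos.2 (fadeOut_mul_norm_lt_one hu t)).ne'
  rwa [neg_mul]

lemma pathViaZero_integrand_le (hu : ‖u‖ < 1) (hv : ‖v‖ < 1) (t : ℝ) :
    ‖deriv (pathViaZero u v) t‖ / (1 - ‖pathViaZero u v t‖ ^ 2) ≤
      -deriv fadeOut t * ‖u‖ / (1 - fadeOut t * ‖u‖) +
        -deriv fadeOut (1 - t) * ‖v‖ / (1 - fadeOut (1 - t) * ‖v‖) := by
  have habs : ∀ s, |deriv fadeOut s| = -deriv fadeOut s :=
    fun s => abs_of_nonpos antitone_fadeOut.deriv_nonpos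
  rcases le_total t (1 / 2) with ht | ht
  · have h : 1 / 2 ≤ 1 - t := by linarith
    obtain ⟨hγ, hγ'⟩ := pathViaZero_of_le_half (u := u) (v := v) ht
    rw [hγ, hγ', deriv_fadeOut_of_half_le h, neg_zero, zero_mul, zero_div, add_zero, ← habs]
    exact norm_smul_div_one_sub_sq_le (fadeOut_nonneg t) (fadeOut_le_one t) hu
  · obtain ⟨hγ, hγ'⟩ := pathViaZero_of_half_le (u := u) (v := v) ht
    rw [hγ, hγ', norm_neg, deriv_fadeOut_of_half_le ht, neg_zero, zero_mul, zero_div, zero_add,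
      ← habs]
    exact norm_smul_div_one_sub_sq_le (fadeOut_nonneg _) (fadeOut_le_one _) hv

lemma hypLength_pathViaZero_le (hu : ‖u‖ < 1) (hv : ‖v‖ < 1) :
    hypLength (pathViaZero u v) ≤ -Real.log (1 - ‖u‖) - Real.log (1 - ‖v‖) := by
  set G : ℝ → ℝ := fun t =>
    Real.log (1 - fadeOut t * ‖u‖) - Real.log (1 - fadeOut (1 - t) * ‖v‖)
  have hG : ∀ t, HasDerivAt G (-deriv fadeOut t * ‖u‖ / (1 - fadeOut t * ‖u‖) +
      -deriv fadeOut (1 - t) * ‖v‖ / (1 - fadeOut (1 - t) * ‖v‖)) t := fun t => by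
    have h := (hasDerivAt_log_one_sub_fadeOut_mul hv (1 - t)).comp t
      ((hasDerivAt_id t).const_sub 1)
    exact ((hasDerivAt_log_one_sub_fadeOut_mul hu t).sub h).congr_deriv (by simp)
  have hint : Continuous fun t =>
      ‖deriv (pathViaZero u v) t‖ / (1 - ‖pathViaZero u v t‖ ^ 2) := by
    refine (contDiff_pathViaZero.continuous_deriv le_rfl).norm.div
      (continuous_const.sub ((contDiff_pathViaZero (n := 0)).continuous.norm.pow 2)) fun t => ?_
    nlinarith [norm_pathViaZero_lt_one hu hv t, norm_nonneg (pathViaZero u v t)]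
  calc hypLength (pathViaZero u v) ≤ G 1 - G 0 :=
        intervalIntegral.integral_le_sub_of_hasDeriv_right_of_le zero_le_one
          (HasDerivAt.continuousOn fun t _ => hG t) (fun t _ => (hG t).hasDerivWithinAt)
          (hint.integrableOn_Icc) fun t _ => pathViaZero_integrand_le hu hv t
    _ = -Real.log (1 - ‖u‖) - Real.log (1 - ‖v‖) := by
      simp only [G, sub_self, fadeOut_zero, fadeOut_of_half_le (show (1 : ℝ) / 2 ≤ 1 by norm_num),
        zero_mul, one_mul, sub_zero, Real.log_one]
      ring

end PathViaZero

lemma hypDistDisk_le_neg_log_sub_log {u v : ℂ} (hu : u ∈ ball (0 : ℂ) 1)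
    (hv : v ∈ ball (0 : ℂ) 1) :
    hypDistDisk u v ≤ -Real.log (1 - ‖u‖) - Real.log (1 - ‖v‖) := by
  rw [mem_ball_zero_iff] at hu hv
  have h := hypDistDisk_le_hypLength contDiff_pathViaZero.contDiffOn
    fun t _ => mem_ball_zero_iff.2 (norm_pathViaZero_lt_one hu hv t)
  rw [pathViaZero_zero, pathViaZero_one] at h
  exact h.trans (hypLength_pathViaZero_le hu hv)

section InverseOfInjective

open Function

variable {U : Set ℂ} {f : ℂ → ℂ} {x : ℂ}

lemma Set.InjOn.not_eventually_eq {α : Type*} {g : ℂ → α} (hinj : InjOn g U) (hU : U ∈ 𝓝 x) :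
    ¬ ∀ᶠ z in 𝓝 x, g z = g x := fun h => by
  have h' : ∀ᶠ z in 𝓝[≠] x, (g z = g x ∧ z ∈ U) ∧ z ≠ x :=
    Eventually.and (nhdsWithin_le_nhds (h.and hU)) self_mem_nhdsWithin
  obtain ⟨z, ⟨hz, hzU⟩, hzx⟩ := h'.exists
  exact hzx (hinj hzU (mem_of_mem_nhds hU) hz)

lemma Set.InjOn.nhds_le_map_nhds (hU : IsOpen U) (hf : DifferentiableOn ℂ f U)
    (hinj : InjOn f U) (hx : x ∈ U) : 𝓝 (f x) ≤ map f (𝓝 x) :=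
  ((hf.analyticAt (hU.mem_nhds hx)).eventually_constant_or_nhds_le_map_nhds).resolve_left
    (hinj.not_eventually_eq (hU.mem_nhds hx))

lemma Set.InjOn.eventually_deriv_ne_zero (hU : IsOpen U) (hf : DifferentiableOn ℂ f U)
    (hinj : InjOn f U) (hx : x ∈ U) : ∀ᶠ z in 𝓝[≠] x, deriv f z ≠ 0 := by
  refine (hf.analyticAt (hU.mem_nhds hx)).deriv.eventually_eq_zero_or_eventually_ne_zero
    |>.resolve_left fun h => hinj.not_eventually_eq (hU.mem_nhds hx) ?_
  obtain ⟨r, hr, hball⟩ := Metric.mem_nhds_iff.1 (inter_mem (hU.mem_nhds hx) h)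
  filter_upwards [ball_mem_nhds x hr] with z hz
  exact isOpen_ball.is_const_of_deriv_eq_zero (convex_ball x r).isPreconnected
    (hf.mono fun y hy => (hball hy).1) (fun y hy => (hball hy).2) hz (mem_ball_self hr)

lemma Set.InjOn.continuousAt_invFunOn (hU : IsOpen U) (hf : DifferentiableOn ℂ f U)
    (hinj : InjOn f U) (hx : x ∈ U) : ContinuousAt (invFunOn f U) (f x) := by
  have hleft : ∀ᶠ z in 𝓝 x, invFunOn f U (f z) = z :=
    eventually_of_mem (hU.mem_nhds hx) fun z hz => hinj.leftInvOn_invFunOn hz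
  rw [ContinuousAt, hinj.leftInvOn_invFunOn hx]
  exact (tendsto_map'_iff.2 (tendsto_id.congr' (hleft.mono fun _ h => h.symm))).mono_left
    (hinj.nhds_le_map_nhds hU hf hx)

lemma Set.InjOn.eventually_apply_invFunOn (hU : IsOpen U) (hf : DifferentiableOn ℂ f U)
    (hinj : InjOn f U) (hx : x ∈ U) : ∀ᶠ y in 𝓝 (f x), f (invFunOn f U y) = y :=
  hinj.nhds_le_map_nhds hU hf hx <| eventually_map.2 <|
    eventually_of_mem (hU.mem_nhds hx) fun z hz => invFunOn_eq ⟨z, hz, rfl⟩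

lemma Set.InjOn.differentiableAt_invFunOn_of_deriv_ne_zero (hU : IsOpen U)
    (hf : DifferentiableOn ℂ f U) (hinj : InjOn f U) (hx : x ∈ U) (hfx : deriv f x ≠ 0) :
    DifferentiableAt ℂ (invFunOn f U) (f x) := by
  have hderiv : HasDerivAt f (deriv f x) (invFunOn f U (f x)) := by
    rw [hinj.leftInvOn_invFunOn hx]
    exact (hf.differentiableAt (hU.mem_nhds hx)).hasDerivAt
  exact (hderiv.of_local_left_inverse (hinj.continuousAt_invFunOn hU hf hx) hfx
    (hinj.eventually_apply_invFunOn hU hf hx)).differentiableAt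

/-- Where `f'` vanishes, the inverse is differentiable by the removable singularity theorem,
the critical points of `f` being isolated. -/
theorem Set.InjOn.differentiableOn_invFunOn (hU : IsOpen U) (hf : DifferentiableOn ℂ f U)
    (hinj : InjOn f U) : DifferentiableOn ℂ (invFunOn f U) (f '' U) := by
  rintro _ ⟨x, hx, rfl⟩
  refine DifferentiableAt.differentiableWithinAt ?_
  by_cases hfx : deriv f x ≠ 0
  · exact hinj.differentiableAt_invFunOn_of_deriv_ne_zero hU hf hx hfx
  have hcrit : ∀ᶠ z in 𝓝 x, z ∈ U ∧ (z ≠ x → deriv f z ≠ 0) :=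
    Eventually.and (hU.mem_nhds hx)
      (eventually_nhdsWithin_iff.1 (hinj.eventually_deriv_ne_zero hU hf hx))
  have hpunct : ∀ᶠ y in 𝓝[≠] f x, DifferentiableAt ℂ (invFunOn f U) y := by
    filter_upwards [nhdsWithin_le_nhds ((hinj.continuousAt_invFunOn hU hf hx).eventually
        (by rw [hinj.leftInvOn_invFunOn hx]; exact hcrit)),
      nhdsWithin_le_nhds (hinj.eventually_apply_invFunOn hU hf hx), self_mem_nhdsWithin]
      with y ⟨hyU, hy⟩ hfy hyx
    have hne : invFunOn f U y ≠ x := fun h => hyx (by rw [← hfy, h, mem_singleton_iff])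
    simpa only [hfy] using hinj.differentiableAt_invFunOn_of_deriv_ne_zero hU hf hyU (hy hne)
  exact (Complex.analyticAt_of_differentiable_on_punctured_nhds_of_continuousAt hpunct
    (hinj.continuousAt_invFunOn hU hf hx)).differentiableAt

end InverseOfInjective

section Mobius

open ComplexConjugate

/-- The automorphism of the unit disk sending `v` to `0`; `‖mobius v p‖` is the
pseudo-hyperbolic distance between `v` and `p`. -/
noncomputable def mobius (v p : ℂ) : ℂ := (p - v) / (1 - conj v * p)

variable {v p : ℂ}

lemma sq_norm_one_sub_conj_mul_sub_sq_norm_sub (v p : ℂ) :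
    ‖1 - conj v * p‖ ^ 2 - ‖p - v‖ ^ 2 = (1 - ‖v‖ ^ 2) * (1 - ‖p‖ ^ 2) := by
  simp only [Complex.sq_norm, Complex.normSq_apply, Complex.sub_re, Complex.sub_im,
    Complex.mul_re, Complex.mul_im, Complex.one_re, Complex.one_im, Complex.conj_re,
    Complex.conj_im]
  ring

lemma one_sub_norm_mul_norm_le_norm_one_sub_conj_mul (v p : ℂ) :
    1 - ‖v‖ * ‖p‖ ≤ ‖1 - conj v * p‖ := by
  simpa [norm_mul] using norm_sub_norm_le (1 : ℂ) (conj v * p)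

lemma norm_mobius_lt_one (hv : ‖v‖ < 1) (hp : ‖p‖ < 1) : ‖mobius v p‖ < 1 := by
  have hden : 0 < ‖1 - conj v * p‖ :=
    (one_sub_norm_mul_norm_le_norm_one_sub_conj_mul v p).trans_lt' (by nlinarith [norm_nonneg v])
  rw [mobius, norm_div, div_lt_one hden]
  refine lt_of_pow_lt_pow_left₀ 2 (norm_nonneg _) ?_
  have : 0 < (1 - ‖v‖ ^ 2) * (1 - ‖p‖ ^ 2) := by
    apply mul_pos <;> nlinarith [norm_nonneg v, norm_nonneg p]
  linarith [sq_norm_one_sub_conj_mul_sub_sq_norm_sub v p]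

lemma differentiableAt_mobius (hv : ‖v‖ < 1) (hp : ‖p‖ < 1) :
    DifferentiableAt ℂ (mobius v) p := by
  have hden : 1 - conj v * p ≠ 0 := fun h => by
    have := one_sub_norm_mul_norm_le_norm_one_sub_conj_mul v p
    rw [h, norm_zero] at this
    nlinarith [norm_nonneg v]
  exact ((differentiableAt_id.sub_const v).div
    ((differentiableAt_const 1).sub (differentiableAt_id.const_mul _)) hden)

lemma one_sub_norm_le_of_norm_mobius_le {k : ℝ} (hv : ‖v‖ < 1) (hp : ‖p‖ < 1)
    (hk : ‖mobius v p‖ ≤ k) : (1 - k ^ 2) / 4 * (1 - ‖p‖) ≤ 1 - ‖v‖ := by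
  rcases le_total 1 (k ^ 2) with hk1 | hk1
  · nlinarith [norm_nonneg p]
  set X := ‖1 - conj v * p‖
  set Y := ‖p - v‖
  have hX : 1 - ‖p‖ ≤ X := (one_sub_norm_mul_norm_le_norm_one_sub_conj_mul v p).trans' <| by
    nlinarith [norm_nonneg v, norm_nonneg p]
  have hY : Y ≤ k * X := by
    rwa [mobius, norm_div, div_le_iff₀ (by linarith)] at hk
  have hk0 : 0 ≤ k := (norm_nonneg _).trans hk
  have hdisk : (1 - ‖p‖) ^ 2 * (1 - k ^ 2) ≤ (1 - ‖v‖ ^ 2) * (1 - ‖p‖ ^ 2) := by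
    rw [← sq_norm_one_sub_conj_mul_sub_sq_norm_sub]
    nlinarith [mul_le_mul hY hY (norm_nonneg _) (by positivity),
      pow_le_pow_left₀ (by linarith) hX 2]
  have hcancel : (1 - ‖p‖) * (1 - k ^ 2) ≤ (1 - ‖v‖ ^ 2) * (1 + ‖p‖) := by
    have hp0 : 0 < 1 - ‖p‖ := by linarith
    nlinarith
  have hfactor : (1 - ‖v‖ ^ 2) * (1 + ‖p‖) ≤ 4 * (1 - ‖v‖) := by
    have h4 : (1 + ‖v‖) * (1 + ‖p‖) ≤ 4 := by nlinarith [norm_nonneg v, norm_nonneg p]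
    nlinarith [mul_le_mul_of_nonneg_left h4 (sub_nonneg.2 hv.le)]
  linarith

/-- The Schwarz lemma applied to `mobius (g c) ∘ g`. -/
lemma norm_mobius_le_dist_div {g : ℂ → ℂ} {c y : ℂ} {d : ℝ}
    (hg : DifferentiableOn ℂ g (ball c d)) (hmaps : MapsTo g (ball c d) (ball 0 1))
    (hy : y ∈ ball c d) : ‖mobius (g c) (g y)‖ ≤ dist y c / d := by
  have hc : ‖g c‖ < 1 := mem_ball_zero_iff.1 (hmaps (mem_ball_self (pos_of_mem_ball hy)))
  have hmob : MapsTo (mobius (g c) ∘ g) (ball c d) (closedBall (mobius (g c) (g c)) 1) := by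
    intro z hz
    simpa [mobius] using (norm_mobius_lt_one hc (mem_ball_zero_iff.1 (hmaps hz))).le
  have hdiff : DifferentiableOn ℂ (mobius (g c) ∘ g) (ball c d) := fun z hz =>
    ((differentiableAt_mobius hc (mem_ball_zero_iff.1 (hmaps hz))).comp_differentiableWithinAt
      z (hg z hz))
  simpa [mobius, div_eq_inv_mul] using Complex.dist_le_div_mul_dist_of_mapsTo_ball hdiff hmob hy

end Mobius

lemma mem_squareSet_self {c : ℂ} {l : ℝ} (hl : 0 ≤ l) : c ∈ squareSet c l := by
  simp only [squareSet, mem_ofPred_eq, sub_self, abs_zero]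
  constructor <;> linarith

lemma dist_le_of_mem_squareSet {c w : ℂ} {l : ℝ} (hw : w ∈ squareSet c l) :
    dist w c ≤ 3 / 4 * l := by
  obtain ⟨hre, him⟩ := hw
  have hl : 0 ≤ l := by linarith [abs_nonneg (w.re - c.re)]
  rw [Complex.dist_eq, ← pow_le_pow_iff_left₀ (norm_nonneg _) (by positivity) two_ne_zero,
    Complex.sq_norm, Complex.normSq_apply]
  simp only [Complex.sub_re, Complex.sub_im]
  nlinarith [sq_abs (w.re - c.re), sq_abs (w.im - c.im), abs_nonneg (w.re - c.re),
    abs_nonneg (w.im - c.im)]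

namespace IsWhitneyDecomposition

variable {D : Set ℂ} {𝒲 : Set (ℂ × ℝ)} {q : ℂ × ℝ}

lemma center_mem (h : IsWhitneyDecomposition D 𝒲) (hq : q ∈ 𝒲) : q.1 ∈ D :=
  h.sq_subset q hq (mem_squareSet_self (h.len_pos q hq).le)

lemma len_le_diam (h : IsWhitneyDecomposition D 𝒲) (hD : Bornology.IsBounded D)
    (hq : q ∈ 𝒲) : q.2 ≤ diam D := by
  have hl := (h.len_pos q hq).le
  have hmem : ∀ s : ℝ, |s| ≤ q.2 / 2 → q.1 + (s : ℂ) ∈ D := fun s hs =>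
    h.sq_subset q hq (by simp [squareSet, hs]; linarith)
  have hdist : dist (q.1 + ((q.2 / 2 : ℝ) : ℂ)) (q.1 + ((-(q.2 / 2) : ℝ) : ℂ)) = q.2 := by
    rw [dist_add_left, Complex.dist_eq, ← Complex.ofReal_sub, Complex.norm_real,
      Real.norm_eq_abs]
    rw [abs_of_nonneg (by linarith)]
    ring
  rw [← hdist]
  exact dist_le_diam_of_mem hD (hmem _ (by rw [abs_of_nonneg (by linarith)]))
    (hmem _ (by rw [abs_neg, abs_of_nonneg (by linarith)]))

lemma len_div_four_le_infDist (h : IsWhitneyDecomposition D 𝒲) (hq : q ∈ 𝒲) {y : ℂ}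
    (hy : y ∈ squareSet q.1 q.2) : q.2 / 4 ≤ infDist y Dᶜ := by
  have := infDist_le_infDist_add_dist (s := Dᶜ) (x := q.1) (y := y)
  linarith [(h.comparable q hq).1, dist_le_of_mem_squareSet hy, dist_comm y q.1]

end IsWhitneyDecomposition

lemma HolderOnWith.dist_le_of_tendsto {X Y α : Type*} [PseudoMetricSpace X]
    [PseudoMetricSpace Y] {C r : ℝ≥0} {f : X → Y} {s : Set X} {l : Filter α} [l.NeBot]
    {g : α → X} {x : X} {b : Y} {ρ : ℝ} (hf : HolderOnWith C r f s) (hx : x ∈ s)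
    (hgs : ∀ᶠ i in l, g i ∈ s) (hgρ : ∀ᶠ i in l, dist (g i) x ≤ ρ)
    (hfg : Tendsto (f ∘ g) l (𝓝 b)) : dist b (f x) ≤ C * ρ ^ (r : ℝ) := by
  refine le_of_tendsto (hfg.dist tendsto_const_nhds) ?_
  filter_upwards [hgs, hgρ] with i hi hiρ
  exact (hf.dist_le hi hx).trans (by gcongr)

lemma add_mul_log_le_mul_rpow {A B a x : ℝ} (hA : 0 ≤ A) (hB : 0 ≤ B) (ha : 0 < a)
    (hx : 1 ≤ x) : A + B * Real.log x ≤ (A + B / a) * x ^ a := by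
  have h1 : A ≤ A * x ^ a := le_mul_of_one_le_right hA (Real.one_le_rpow hx ha.le)
  have h2 : B * Real.log x ≤ B * (x ^ a / a) :=
    mul_le_mul_of_nonneg_left (Real.log_le_rpow_div (by linarith) ha) hB
  calc A + B * Real.log x ≤ A * x ^ a + B * (x ^ a / a) := add_le_add h1 h2
    _ = (A + B / a) * x ^ a := by ring

lemma neg_log_le_of_le_or_le_mul_rpow {y δ β L K : ℝ} (hy : 0 < y) (hδ0 : 0 < δ) (hδ1 : δ ≤ 1)
    (hβ : 0 < β) (hL : 0 < L) (hLK : L ≤ K) (h : δ ≤ y ∨ L ≤ K * y ^ β) :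
    -Real.log y ≤ -Real.log δ + β⁻¹ * Real.log (K / L) := by
  have hKL : 0 ≤ β⁻¹ * Real.log (K / L) :=
    mul_nonneg (inv_nonneg.2 hβ.le) (Real.log_nonneg ((one_le_div hL).2 hLK))
  rcases h with h | h
  · linarith [Real.log_le_log hδ0 h]
  · have hlog := Real.log_le_log hL h
    rw [Real.log_mul (by linarith) (Real.rpow_pos_of_pos hy β).ne', Real.log_rpow hy] at hlog
    have hy' : -Real.log y ≤ β⁻¹ * Real.log (K / L) := by
      rw [Real.log_div (by linarith) hL.ne', ← div_eq_inv_mul, le_div_iff₀ hβ]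
      linarith
    linarith [Real.log_nonpos hδ0.le hδ1]

lemma one_sub_norm_le_of_apply_mem_squareSet {D : Set ℂ} {φ : ℂ → ℂ} {𝒲 : Set (ℂ × ℝ)}
    {Q : ℂ × ℝ} {p v : ℂ} (hφdiff : DifferentiableOn ℂ φ (ball 0 1))
    (hφinj : InjOn φ (ball 0 1)) (hφim : φ '' ball 0 1 = D)
    (h𝒲 : IsWhitneyDecomposition D 𝒲) (hQ : Q ∈ 𝒲) (hp : p ∈ ball (0 : ℂ) 1)
    (hpQ : φ p ∈ squareSet Q.1 Q.2) (hv : v ∈ ball (0 : ℂ) 1) (hφv : φ v = Q.1) :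
    1 - ‖p‖ ≤ 64 / 7 * (1 - ‖v‖) := by
  set ψ := Function.invFunOn φ (ball (0 : ℂ) 1)
  set d := infDist Q.1 Dᶜ
  have hLd : Q.2 ≤ d := (h𝒲.comparable Q hQ).1
  have hball : ball Q.1 d ⊆ φ '' ball 0 1 := hφim ▸ ball_infDist_compl_subset
  have hψ : DifferentiableOn ℂ ψ (ball Q.1 d) :=
    (hφinj.differentiableOn_invFunOn isOpen_ball hφdiff).mono hball
  have hmaps : MapsTo ψ (ball Q.1 d) (ball 0 1) := fun _ hy => Function.invFunOn_mem (hball hy)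
  have hpQ' : dist (φ p) Q.1 ≤ 3 / 4 * Q.2 := dist_le_of_mem_squareSet hpQ
  have hpd : φ p ∈ ball Q.1 d := by
    rw [mem_ball]; linarith [h𝒲.len_pos Q hQ]
  have hmob : ‖mobius v p‖ ≤ 3 / 4 := by
    have hψv : ψ Q.1 = v := hφv ▸ hφinj.leftInvOn_invFunOn hv
    have hψp : ψ (φ p) = p := hφinj.leftInvOn_invFunOn hp
    have h := norm_mobius_le_dist_div hψ hmaps hpd
    rw [hψv, hψp] at h
    exact h.trans ((div_le_iff₀ (by linarith [h𝒲.len_pos Q hQ])).2 (by linarith))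
  have h := one_sub_norm_le_of_norm_mobius_le (mem_ball_zero_iff.1 hv)
    (mem_ball_zero_iff.1 hp) hmob
  linarith

lemma norm_real_smul_of_norm_eq_one {ζ : ℂ} (hζ : ‖ζ‖ = 1) (s : ℝ) : ‖s • ζ‖ = |s| := by
  rw [norm_smul, hζ, mul_one, Real.norm_eq_abs]

lemma real_smul_mem_of_one_sub_lt {S : Set ℂ} {ζ : ℂ} (hζS : ζ ∈ S) (hζ : ‖ζ‖ = 1)
    {s δ : ℝ} (hs0 : 0 ≤ s) (hs1 : s < 1) (hsδ : 1 - s < δ) :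
    s • ζ ∈ {w ∈ ball (0 : ℂ) 1 | infDist w S < δ} := by
  refine ⟨by rwa [mem_ball_zero_iff, norm_real_smul_of_norm_eq_one hζ, abs_of_nonneg hs0],
    (infDist_le_dist_of_mem hζS).trans_lt ?_⟩
  have h : s • ζ - ζ = (s - 1) • ζ := by rw [sub_smul, one_smul]
  rwa [dist_eq_norm, h, norm_real_smul_of_norm_eq_one hζ, abs_of_nonpos (by linarith), neg_sub]

/-- `ζ` itself lies outside the Hölder neighbourhood; the bound reaches it by continuity
along the radius. -/
lemma dist_apply_real_smul_le {φ : ℂ → ℂ} {S : Set ℂ} {δ : ℝ} {C r : ℝ≥0} {ζ : ℂ} {T : ℝ}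
    (hφcont : ContinuousWithinAt φ (closedBall (0 : ℂ) 1) ζ)
    (hHolder : HolderOnWith C r φ {w ∈ ball (0 : ℂ) 1 | infDist w S < δ})
    (hζS : ζ ∈ S) (hζ : ‖ζ‖ = 1) (hT0 : 0 ≤ T) (hT1 : T < 1) (hTδ : 1 - T < δ) :
    dist (φ ζ) (φ (T • ζ)) ≤ C * (1 - T) ^ (r : ℝ) := by
  have hnear : ∀ᶠ s in 𝓝[<] (1 : ℝ), s ∈ Ioo (max T (1 - δ)) 1 :=
    Ioo_mem_nhdsLT (max_lt hT1 (by linarith))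
  have hray : Tendsto (fun s : ℝ => s • ζ) (𝓝[<] 1) (𝓝[closedBall 0 1] ζ) := by
    refine tendsto_nhdsWithin_iff.2
      ⟨((continuous_id.smul continuous_const).tendsto' (1 : ℝ) ζ (one_smul ℝ ζ)).mono_left
        nhdsWithin_le_nhds, ?_⟩
    filter_upwards [hnear] with s ⟨hs, hs1⟩
    rw [mem_closedBall_zero_iff, norm_real_smul_of_norm_eq_one hζ, abs_of_nonneg]
    all_goals linarith [le_max_left T (1 - δ)]
  refine hHolder.dist_le_of_tendsto (real_smul_mem_of_one_sub_lt hζS hζ hT0 hT1 hTδ) ?_ ?_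
    (hφcont.tendsto.comp hray)
  · filter_upwards [hnear] with s ⟨hs, hs1⟩
    exact real_smul_mem_of_one_sub_lt hζS hζ (by linarith [le_max_left T (1 - δ)]) hs1
      (by linarith [le_max_right T (1 - δ)])
  · filter_upwards [hnear] with s ⟨hs, hs1⟩
    rw [dist_eq_norm, ← sub_smul, norm_real_smul_of_norm_eq_one hζ, abs_of_nonneg]
    all_goals linarith [le_max_left T (1 - δ)]

lemma le_one_sub_or_len_le_mul_rpow {D X : Set ℂ} {φ : ℂ → ℂ} {𝒲 : Set (ℂ × ℝ)} {Q : ℂ × ℝ}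
    {δ : ℝ} {C r : ℝ≥0} {ζ : ℂ} {T : ℝ}
    (hφcont : ContinuousOn φ (closedBall (0 : ℂ) 1)) (hφinj : InjOn φ (closedBall (0 : ℂ) 1))
    (hφim : φ '' ball (0 : ℂ) 1 = D)
    (hHolder : HolderOnWith C r φ
      {w ∈ ball (0 : ℂ) 1 | infDist w (sphere (0 : ℂ) 1 ∩ φ ⁻¹' X) < δ})
    (h𝒲 : IsWhitneyDecomposition D 𝒲) (hQ : Q ∈ 𝒲) (hζ : ζ ∈ sphere (0 : ℂ) 1 ∩ φ ⁻¹' X)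
    (hT0 : 0 ≤ T) (hT1 : T < 1) (hTQ : φ (T • ζ) ∈ squareSet Q.1 Q.2) :
    δ ≤ 1 - T ∨ Q.2 ≤ 4 * C * (1 - T) ^ (r : ℝ) := by
  refine or_iff_not_imp_left.2 fun hTδ => ?_
  have hζn : ‖ζ‖ = 1 := mem_sphere_zero_iff_norm.1 hζ.1
  have hζD : φ ζ ∈ Dᶜ := by
    rw [← hφim, mem_compl_iff, hφinj.mem_image_iff ball_subset_closedBall
      (sphere_subset_closedBall hζ.1), mem_ball_zero_iff, hζn]
    exact lt_irrefl 1
  have hinf := (h𝒲.len_div_four_le_infDist hQ hTQ).trans (infDist_le_dist_of_mem hζD)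
  rw [dist_comm] at hinf
  linarith [dist_apply_real_smul_le (hφcont ζ (sphere_subset_closedBall hζ.1)) hHolder hζ hζn
    hT0 hT1 (not_le.1 hTδ)]

lemma Real.tanh_nonneg {t : ℝ} (ht : 0 ≤ t) : 0 ≤ Real.tanh t := by
  rw [Real.tanh_eq_sinh_div_cosh]
  exact div_nonneg (Real.sinh_nonneg_iff.2 ht) (Real.cosh_pos t).le

lemma neg_log_one_sub_norm_le {D X : Set ℂ} {φ : ℂ → ℂ} {𝒲 : Set (ℂ × ℝ)} {Q : ℂ × ℝ}
    {δ β K : ℝ} {C : ℝ≥0} {ζ v : ℂ} {t : ℝ}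
    (hφcont : ContinuousOn φ (closedBall (0 : ℂ) 1))
    (hφdiff : DifferentiableOn ℂ φ (ball (0 : ℂ) 1))
    (hφinj : InjOn φ (closedBall (0 : ℂ) 1)) (hφim : φ '' ball (0 : ℂ) 1 = D)
    (hδ : δ ∈ Ioo (0 : ℝ) 1) (hβ : 0 < β)
    (hHolder : HolderOnWith C β.toNNReal φ
      {w ∈ ball (0 : ℂ) 1 | infDist w (sphere (0 : ℂ) 1 ∩ φ ⁻¹' X) < δ})
    (h𝒲 : IsWhitneyDecomposition D 𝒲) (hQ : Q ∈ 𝒲) (hCK : 4 * C ≤ K) (hQK : Q.2 ≤ K)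
    (hζ : ζ ∈ sphere (0 : ℂ) 1 ∩ φ ⁻¹' X) (ht : 0 ≤ t)
    (hQt : φ (Real.tanh t • ζ) ∈ squareSet Q.1 Q.2) (hv : v ∈ ball (0 : ℂ) 1)
    (hφv : φ v = Q.1) :
    -Real.log (1 - ‖v‖) ≤ Real.log (64 / 7) - Real.log δ + β⁻¹ * Real.log (K / Q.2) := by
  have hT0 := Real.tanh_nonneg ht
  have hT1 := Real.tanh_lt_one t
  have hpn : ‖Real.tanh t • ζ‖ = Real.tanh t := by
    rw [norm_real_smul_of_norm_eq_one (mem_sphere_zero_iff_norm.1 hζ.1), abs_of_nonneg hT0]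
  have hvp := one_sub_norm_le_of_apply_mem_squareSet hφdiff
    (hφinj.mono ball_subset_closedBall) hφim h𝒲 hQ (mem_ball_zero_iff.2 (hpn.trans_lt hT1))
    hQt hv hφv
  rw [hpn] at hvp
  have hholder := le_one_sub_or_len_le_mul_rpow hφcont hφinj hφim hHolder h𝒲 hQ hζ hT0 hT1 hQt
  rw [Real.coe_toNNReal β hβ.le] at hholder
  have hT := neg_log_le_of_le_or_le_mul_rpow (by linarith) hδ.1 hδ.2.le hβ
    (h𝒲.len_pos Q hQ) hQK (hholder.imp_right fun h => h.trans (by gcongr))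
  have hlog := Real.log_le_log (by linarith) hvp
  rw [Real.log_mul (by norm_num) (by linarith [mem_ball_zero_iff.1 hv])] at hlog
  linarith

theorem whitney_geodesic_distance_bound_general
    (D : Set ℂ) (hDbd : Bornology.IsBounded D)
    (φ : ℂ → ℂ)
    (hφcont : ContinuousOn φ (closedBall (0 : ℂ) 1))
    (hφdiff : DifferentiableOn ℂ φ (ball (0 : ℂ) 1))
    (hφinj : Set.InjOn φ (closedBall (0 : ℂ) 1))
    (hφim : φ '' ball (0 : ℂ) 1 = D)
    (X : Set ℂ)
    (δ β : ℝ) (hδ : δ ∈ Set.Ioo (0 : ℝ) 1) (hβ : β ∈ Set.Ioo (0 : ℝ) 1)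
    (hHolder : ∃ C : ℝ≥0, HolderOnWith C β.toNNReal φ
      {w ∈ ball (0 : ℂ) 1 | Metric.infDist w (sphere (0 : ℂ) 1 ∩ φ ⁻¹' X) < δ})
    (𝒲 : Set (ℂ × ℝ)) (h𝒲 : IsWhitneyDecomposition D 𝒲)
    (Q0 : ℂ × ℝ) (hQ0 : Q0 ∈ 𝒲)
    (a : ℝ) (ha : a ∈ Set.Ioo (0 : ℝ) 1) :
    ∃ M : ℝ, 0 < M ∧ ∀ w ∈ X, ∀ Q ∈ 𝒲,
      (∃ ζ ∈ sphere (0 : ℂ) 1, φ ζ = w ∧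
        ∃ t : ℝ, 0 ≤ t ∧ φ (Real.tanh t • ζ) ∈ squareSet Q.1 Q.2) →
      ∀ u ∈ ball (0 : ℂ) 1, ∀ v ∈ ball (0 : ℂ) 1,
        φ u = Q0.1 → φ v = Q.1 → hypDistDisk u v ≤ M * Q.2 ^ (-a) := by
  obtain ⟨C, hC⟩ := hHolder
  obtain ⟨u₀, hu₀, hφu₀⟩ : Q0.1 ∈ φ '' ball (0 : ℂ) 1 := hφim ▸ h𝒲.center_mem hQ0
  set K := 4 * (C : ℝ) + diam D
  have hlenK : ∀ Q ∈ 𝒲, Q.2 ≤ K := fun Q hQ =>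
    (h𝒲.len_le_diam hDbd hQ).trans (le_add_of_nonneg_left (by positivity))
  have hK : 0 < K := (h𝒲.len_pos Q0 hQ0).trans_le (hlenK Q0 hQ0)
  set A := -Real.log (1 - ‖u₀‖) + Real.log (64 / 7) - Real.log δ
  have hA : 0 ≤ A := by
    have hu₀' := mem_ball_zero_iff.1 hu₀
    linarith [Real.log_nonpos (by linarith) (by linarith [norm_nonneg u₀] : 1 - ‖u₀‖ ≤ 1),
      Real.log_nonneg (by norm_num : (1 : ℝ) ≤ 64 / 7), Real.log_nonpos hδ.1.le hδ.2.le]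
  refine ⟨(A + β⁻¹ / a) * K ^ a, by have := hβ.1; have := ha.1; positivity, ?_⟩
  rintro w hw Q hQ ⟨ζ, hζ, rfl, t, ht, hQt⟩ u hu v hv hφu hφv
  obtain rfl : u = u₀ := hφinj.mono ball_subset_closedBall hu hu₀ (hφu.trans hφu₀.symm)
  have hv' := neg_log_one_sub_norm_le hφcont hφdiff hφinj hφim hδ hβ.1 hC h𝒲 hQ
    (le_add_of_nonneg_right diam_nonneg) (hlenK Q hQ) ⟨hζ, hw⟩ ht hQt hv hφv
  have hQ2 := h𝒲.len_pos Q hQ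
  calc hypDistDisk u v ≤ -Real.log (1 - ‖u‖) - Real.log (1 - ‖v‖) :=
        hypDistDisk_le_neg_log_sub_log hu hv
    _ ≤ A + β⁻¹ * Real.log (K / Q.2) := by linarith
    _ ≤ (A + β⁻¹ / a) * (K / Q.2) ^ a :=
        add_mul_log_le_mul_rpow hA (inv_nonneg.2 hβ.1.le) ha.1 ((one_le_div hQ2).2 (hlenK Q hQ))
    _ = (A + β⁻¹ / a) * K ^ a * Q.2 ^ (-a) := by
        rw [Real.div_rpow hK.le hQ2.le, Real.rpow_neg hQ2.le]
        ring

/-- **Hyperbolic distance bound for Whitney squares hit by geodesics to a Hölder boundary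
set.**  `D` is a bounded Jordan domain (encoded via the boundary extension of the Riemann
map: `φ` maps the closed disk homeomorphically, is conformal inside, maps the open disk
onto `D` and the unit circle onto `∂D`), `z = φ 0 ∈ D`, `φ' 0 > 0`, and `X ⊆ ∂D` is a
nonempty set such that `φ` is `β`-Hölder on the `δ`-neighborhood `W` in the disk of
`φ⁻¹ X ⊆ ∂𝔻`.  `𝒲` is a Whitney square decomposition of `D` and `Q0 ∈ 𝒲` contains `z`.
Then for each `a ∈ (0,1)` there is `M > 0` such that whenever `w ∈ X` and the hyperbolic
geodesic in `D` from `z` to `w` (the image under `φ` of the radial geodesic `t ↦ tanh t • ζ`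
towards `ζ ∈ ∂𝔻` with `φ ζ = w`) passes through some `Q ∈ 𝒲`, the hyperbolic distance in
`D` between `cen Q0` and `cen Q` (i.e. the hyperbolic distance in `𝔻` between their
preimages under `φ`) is at most `M * (len Q) ^ (-a)`. -/
theorem whitney_geodesic_distance_bound
    (D : Set ℂ) (hDopen : IsOpen D) (hDbd : Bornology.IsBounded D)
    (z : ℂ) (hz : z ∈ D)
    (φ : ℂ → ℂ)
    (hφcont : ContinuousOn φ (closedBall (0 : ℂ) 1))
    (hφdiff : DifferentiableOn ℂ φ (ball (0 : ℂ) 1))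
    (hφinj : Set.InjOn φ (closedBall (0 : ℂ) 1))
    (hφim : φ '' ball (0 : ℂ) 1 = D)
    (hφbd : φ '' sphere (0 : ℂ) 1 = frontier D)
    (hφ0 : φ 0 = z)
    (hφ'0 : (deriv φ 0).im = 0 ∧ 0 < (deriv φ 0).re)
    (X : Set ℂ) (hXne : X.Nonempty) (hXsub : X ⊆ frontier D)
    (δ β : ℝ) (hδ : δ ∈ Set.Ioo (0 : ℝ) 1) (hβ : β ∈ Set.Ioo (0 : ℝ) 1)
    (hHolder : ∃ C : ℝ≥0, HolderOnWith C β.toNNReal φ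
      {w ∈ ball (0 : ℂ) 1 | Metric.infDist w (sphere (0 : ℂ) 1 ∩ φ ⁻¹' X) < δ})
    (𝒲 : Set (ℂ × ℝ)) (h𝒲 : IsWhitneyDecomposition D 𝒲)
    (Q0 : ℂ × ℝ) (hQ0 : Q0 ∈ 𝒲) (hzQ0 : z ∈ squareSet Q0.1 Q0.2)
    (a : ℝ) (ha : a ∈ Set.Ioo (0 : ℝ) 1) :
    ∃ M : ℝ, 0 < M ∧ ∀ w ∈ X, ∀ Q ∈ 𝒲,
      (∃ ζ ∈ sphere (0 : ℂ) 1, φ ζ = w ∧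
        ∃ t : ℝ, 0 ≤ t ∧ φ (Real.tanh t • ζ) ∈ squareSet Q.1 Q.2) →
      ∀ u ∈ ball (0 : ℂ) 1, ∀ v ∈ ball (0 : ℂ) 1,
        φ u = Q0.1 → φ v = Q.1 → hypDistDisk u v ≤ M * Q.2 ^ (-a) :=
  whitney_geodesic_distance_bound_general D hDbd φ hφcont hφdiff hφinj hφim X δ β hδ hβ hHolder 𝒲 h𝒲
    Q0 hQ0 a ha
end

section
/- Fix n ∈ ℕ, r₀ > 0, and a compact set K ⊆ ℍ (the upper half-plane). There exists a constant C = C(n, K, r₀) such that for any distinct points z₁, …, zₙ ∈ K, one can choose for each 1 ≤ j ≤ n an integer n_j ∈ ℕ and radii s_{j,k}, r_{j,k} ∈ (0, r₀) (all r_{j,k} negative powers of 2) with 0 < s_{j,k} < r_{j,k} for 1 ≤ k ≤ n_j − 1 and s_{j,n_j} = 0 < r_{j,n_j}, such that the annuli B(z_j, r_{j,k}) \ B(z_j, s_{j,k}) are pairwise disjoint (over all j, k) and ∏_{j=1}^n (∏_{k=1}^{n_j−1} s_{j,k}) / (∏_{k=1}^{n_j} r_{j,k}) ≤ C ∏_{j=1}^n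 1/min_{i<j} |z_j − z_i|, with the conventions that an empty product equals 1 and z₀ = 0. Moreover one may take n_j ≤ n for all j. -/
/-!
The points are inserted in order. The new point `z j` receives a disc of dyadic radius
`ρ ≍ min D r₀`, where `D = min (‖z j‖, minᵢ<ⱼ ‖z j - z i‖)`, so it contributes a factor
`1 / ρ ≲ 1 / D`. Each earlier centre `z i`, at distance `d ≥ 2ρ` from `z j`, then removes from its
chain of annuli the radii in a band `[tl, d + ρ)`, with `tl` dyadic and comparable to `d - ρ`:
the disc lies in that band around `z i`, and as `K ⊆ B(0, M)` the band has ratio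
`(d + ρ) / tl ≤ 6M`. Removing a band multiplies the product `∏ s / ∏ r` of a chain by at most
that ratio for each of its pieces and splits at most one piece, so no chain has more than `n`
pieces and each insertion costs at most a factor `(6M)^(n²)`.
-/

open Complex Metric Set Finset

def IsDyadic (x : ℝ) : Prop := ∃ p : ℕ, x = 2⁻¹ ^ p

theorem IsDyadic.min {x y : ℝ} (hx : IsDyadic x) (hy : IsDyadic y) : IsDyadic (min x y) := by
  rcases le_total x y with h | h
  · rwa [min_eq_left h]
  · rwa [min_eq_right h]

theorem exists_isDyadic_mem_Icc {x : ℝ} (hx₀ : 0 < x) (hx₁ : x ≤ 1) :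
    ∃ q, IsDyadic q ∧ q ∈ Icc (x / 2) x := by
  obtain ⟨p, hp, hp'⟩ := exists_nat_pow_near ((one_le_inv₀ hx₀).2 hx₁) one_lt_two
  have hx : x ≤ 2⁻¹ ^ p := by
    rw [inv_pow]; exact (le_inv_comm₀ (by positivity) hx₀).1 hp
  have hx' : 2⁻¹ ^ (p + 1) < x := by
    rw [inv_pow]; exact (inv_lt_comm₀ hx₀ (by positivity)).1 hp'
  refine ⟨2⁻¹ ^ (p + 1), ⟨_, rfl⟩, ?_, hx'.le⟩
  rw [pow_succ]
  linarith

theorem exists_dyadic_radius {r₀ M : ℝ} (hr₀ : 0 < r₀) (hM : 1 ≤ M) :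
    ∃ A > 0, ∀ D, 0 < D → D ≤ M →
      ∃ ρ, IsDyadic ρ ∧ 0 < ρ ∧ ρ < r₀ ∧ 2 * ρ ≤ D ∧ D ≤ A * ρ := by
  set m := min r₀ 1
  have hm : 0 < m := lt_min hr₀ one_pos
  refine ⟨4 * M / m, by positivity, fun D hD hDM => ?_⟩
  obtain ⟨ρ, hρd, hρ₁, hρ₂⟩ := exists_isDyadic_mem_Icc (x := min D m / 2) (by positivity)
    (by linarith [min_le_right D m, min_le_right r₀ 1])
  have hρ₀ : 0 < ρ := lt_of_lt_of_le (by positivity) hρ₁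
  refine ⟨ρ, hρd, hρ₀, by linarith [min_le_right D m, min_le_left r₀ 1], by
    linarith [min_le_left D m], ?_⟩
  rw [div_mul_eq_mul_div, le_div_iff₀ hm]
  rcases min_cases D m with ⟨h, -⟩ | ⟨h, -⟩ <;> rw [h] at hρ₁
  · nlinarith [min_le_right r₀ 1]
  · nlinarith

theorem exists_dyadic_band {d ρ M : ℝ} (hρ : 0 < ρ) (hρd : 2 * ρ ≤ d) (hdM : d ≤ 2 * M)
    (hM : 1 ≤ M) : ∃ tl, IsDyadic tl ∧ 0 < tl ∧ tl ≤ d - ρ ∧ d + ρ ≤ 6 * M * tl := by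
  have hx : 0 < min (d - ρ) 1 := lt_min (by linarith) one_pos
  obtain ⟨tl, htld, htl₁, htl₂⟩ := exists_isDyadic_mem_Icc hx (min_le_right _ _)
  refine ⟨tl, htld, lt_of_lt_of_le (half_pos hx) htl₁, htl₂.trans (min_le_left _ _), ?_⟩
  rcases min_cases (d - ρ) 1 with ⟨h, -⟩ | ⟨h, -⟩ <;> rw [h] at htl₁ <;> nlinarith

theorem prod_Icc_getD {α M : Type*} [CommMonoid M] (l : List α) (d : α) (f : α → M) :
    ∏ k ∈ Icc 1 l.length, f (l.getD (k - 1) d) = (l.map f).prod := by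
  rw [← Finset.Ico_add_one_right_eq_Icc, Finset.prod_Ico_eq_prod_range, Finset.prod_range]
  simp

theorem ball_sdiff_ball_eq_preimage (w : ℂ) (s r : ℝ) :
    Metric.ball w r \ Metric.ball w s = (dist · w) ⁻¹' Ico s r := by
  ext x
  simp [and_comm]

noncomputable def radiusRatio (p : ℝ × ℝ) : ℝ := p.1 / p.2

theorem prod_radiusRatio_nonneg {l : List (ℝ × ℝ)} (hl : ∀ p ∈ l, 0 ≤ p.1 ∧ p.1 < p.2) :
    0 ≤ (l.map radiusRatio).prod :=
  List.prod_nonneg <| by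
    simp only [List.mem_map]
    rintro _ ⟨p, hp, rfl⟩
    exact div_nonneg (hl p hp).1 ((hl p hp).1.trans (hl p hp).2.le)

theorem prod_map_radiusRatio (l : List (ℝ × ℝ)) :
    (l.map radiusRatio).prod = (l.map Prod.fst).prod / (l.map Prod.snd).prod := by
  have := Multiset.prod_map_div (m := (l : Multiset (ℝ × ℝ))) (f := Prod.fst) (g := Prod.snd)
  simp only [Multiset.map_coe, Multiset.prod_coe] at this
  exact this

noncomputable def trimPiece (tl th : ℝ) (p : ℝ × ℝ) : List (ℝ × ℝ) :=
  [(max p.1 th, p.2), (p.1, min p.2 tl)].filter fun q => q.1 < q.2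

section trimPiece

variable {tl th : ℝ}

theorem mem_trimPiece {p q : ℝ × ℝ} :
    q ∈ trimPiece tl th p ↔ (q = (max p.1 th, p.2) ∨ q = (p.1, min p.2 tl)) ∧ q.1 < q.2 := by
  simp [trimPiece]

theorem le_of_mem_trimPiece {p q : ℝ × ℝ} (hq : q ∈ trimPiece tl th p) : p.1 ≤ q.1 ∧ q.2 ≤ p.2 := by
  rcases mem_trimPiece.1 hq with ⟨rfl | rfl, -⟩
  exacts [⟨le_max_left _ _, le_rfl⟩, ⟨le_rfl, min_le_left _ _⟩]

theorem biUnion_trimPiece (p : ℝ × ℝ) :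
    ⋃ q ∈ trimPiece tl th p, Ico q.1 q.2 = Ico p.1 p.2 \ Ico tl th := by
  ext x
  simp only [mem_iUnion, mem_trimPiece, exists_prop, Set.mem_Ico, mem_sdiff]
  constructor
  · rintro ⟨q, ⟨rfl | rfl, -⟩, hq⟩
    · rw [max_le_iff] at hq
      exact ⟨⟨hq.1.1, hq.2⟩, fun h => h.2.not_ge hq.1.2⟩
    · rw [lt_min_iff] at hq
      exact ⟨⟨hq.1, hq.2.1⟩, fun h => h.1.not_gt hq.2.2⟩
  · rintro ⟨⟨h₁, h₂⟩, h⟩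
    rcases lt_or_ge x tl with hx | hx
    · exact ⟨(p.1, min p.2 tl), ⟨Or.inr rfl, h₁.trans_lt (lt_min h₂ hx)⟩, h₁, lt_min h₂ hx⟩
    · have hx' : th ≤ x := not_lt.1 fun hx' => h ⟨hx, hx'⟩
      exact ⟨(max p.1 th, p.2), ⟨Or.inl rfl, (max_le h₁ hx').trans_lt h₂⟩, max_le h₁ hx', h₂⟩

theorem length_trimPiece_le_one {p : ℝ × ℝ} (hp : ¬(p.1 < tl ∧ th < p.2)) :
    (trimPiece tl th p).length ≤ 1 := by
  by_cases h₁ : max p.1 th < p.2 <;> by_cases h₂ : p.1 < min p.2 tl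
  · exact absurd ⟨h₂.trans_le (min_le_right _ _), (le_max_right _ _).trans_lt h₁⟩ hp
  all_goals simp [trimPiece, h₁, h₂]

theorem length_flatMap_trimPiece_le (hth : tl ≤ th) {l : List (ℝ × ℝ)}
    (hl : l.Pairwise fun p q => q.2 ≤ p.1) :
    (l.flatMap (trimPiece tl th)).length ≤ l.length + 1 := by
  induction l with
  | nil => simp
  | cons p l ih =>
    rw [List.pairwise_cons] at hl
    rw [List.flatMap_cons, List.length_append, List.length_cons]
    by_cases hp : p.1 < tl ∧ th < p.2
    · -- the pieces after `p` lie inside its hole, below the band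
      have hrest : (l.flatMap (trimPiece tl th)).length ≤ l.length := by
        have h₁ : ∀ x ∈ l.map fun q => (trimPiece tl th q).length, x ≤ 1 := by
          simp only [List.mem_map]
          rintro _ ⟨q, hq, rfl⟩
          exact length_trimPiece_le_one fun h => (hl.1 q hq).not_gt (by linarith [h.2])
        rw [List.length_flatMap]
        simpa using List.sum_le_card_nsmul _ 1 h₁
      have : (trimPiece tl th p).length ≤ 2 := List.length_filter_le _ _
      omega
    · have := length_trimPiece_le_one hp
      have := ih hl.2
      omega

-- On a log scale the pieces are the interval of `p` minus a part of length `≤ log (th / tl)`.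
theorem prod_radiusRatio_trimPiece_le (htl : 0 < tl) (hth : tl ≤ th) {p : ℝ × ℝ}
    (hp : 0 ≤ p.1) (hpr : p.1 < p.2) :
    ((trimPiece tl th p).map radiusRatio).prod ≤ th / tl * radiusRatio p := by
  obtain ⟨s, r⟩ := p
  dsimp only at hp hpr
  have hr : 0 < r := hp.trans_lt hpr
  simp only [trimPiece, radiusRatio]
  rcases lt_or_ge s tl with hs | hs <;> rcases lt_or_ge th r with hr' | hr'
  · have h₁ : max s th = th := max_eq_right (by linarith)
    have h₂ : min r tl = tl := min_eq_right (by linarith)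
    simp only [h₁, h₂, hr', hs, List.filter, decide_true, List.map, List.prod_cons,
      List.prod_nil, radiusRatio]
    exact le_of_eq (by field_simp)
  · have h₁ : ¬max s th < r := not_lt.2 (le_max_of_le_right hr')
    have h₂ : s < min r tl := lt_min hpr hs
    simp only [h₁, h₂, List.filter, decide_true, decide_false, List.map, List.prod_cons,
      List.prod_nil, radiusRatio]
    rw [mul_one, div_mul_div_comm, div_le_div_iff₀ (lt_min hr htl) (by positivity)]
    rcases min_cases r tl with ⟨h, -⟩ | ⟨h, -⟩ <;> rw [h]
    · nlinarith [mul_nonneg (mul_nonneg (sub_nonneg.2 hth) hp) hr.le]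
    · nlinarith [mul_nonneg (mul_nonneg (sub_nonneg.2 hr') hp) htl.le]
  · have h₁ : max s th < r := max_lt hpr hr'
    have h₂ : ¬s < min r tl := not_lt.2 ((min_le_right r tl).trans hs)
    simp only [h₁, h₂, List.filter, decide_true, decide_false, List.map, List.prod_cons,
      List.prod_nil, radiusRatio]
    rw [mul_one, div_mul_div_comm, div_le_div_iff₀ hr (by positivity)]
    rcases max_cases s th with ⟨h, -⟩ | ⟨h, -⟩ <;> rw [h]
    · nlinarith [mul_nonneg (mul_nonneg (sub_nonneg.2 hth) hp) hr.le]
    · nlinarith [mul_nonneg (mul_nonneg (sub_nonneg.2 hs) (htl.trans_le hth).le) hr.le]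
  · have h₁ : ¬max s th < r := not_lt.2 (le_max_of_le_right hr')
    have h₂ : ¬s < min r tl := not_lt.2 ((min_le_right r tl).trans hs)
    simp only [h₁, h₂, List.filter, decide_false, List.map_nil, List.prod_nil]
    rw [div_mul_div_comm, one_le_div (by positivity)]
    nlinarith

theorem prod_radiusRatio_flatMap_trimPiece_le (htl : 0 < tl) (hth : tl ≤ th)
    {l : List (ℝ × ℝ)} (hl : ∀ p ∈ l, 0 ≤ p.1 ∧ p.1 < p.2) :
    ((l.flatMap (trimPiece tl th)).map radiusRatio).prod ≤
      (th / tl) ^ l.length * (l.map radiusRatio).prod := by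
  rw [List.map_flatMap, List.flatMap, List.prod_flatten, List.map_map]
  calc _ ≤ (l.map fun p => th / tl * radiusRatio p).prod := by
        refine List.prod_map_le_prod_map₀ _ _ (fun p hp => prod_radiusRatio_nonneg fun q hq => ?_)
          fun p hp => prod_radiusRatio_trimPiece_le htl hth (hl p hp).1 (hl p hp).2
        exact ⟨(hl p hp).1.trans (le_of_mem_trimPiece hq).1, (mem_trimPiece.1 hq).2⟩
    _ = _ := by simp [List.prod_map_mul]

end trimPiece

/-- Annuli `(inner, outer)` around a common centre, listed from the outside in, followed by the
ball of radius `core`, which `pieces` records as the degenerate annulus `(0, core)`. -/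
structure AnnulusChain where
  annuli : List (ℝ × ℝ)
  core : ℝ

namespace AnnulusChain

variable (c : AnnulusChain) {r₀ tl th : ℝ}

def pieces : List (ℝ × ℝ) := c.annuli ++ [(0, c.core)]

def radii : Set ℝ := ⋃ p ∈ c.pieces, Ico p.1 p.2

def support (w : ℂ) : Set ℂ := (dist · w) ⁻¹' c.radii

noncomputable def weight : ℝ := (c.annuli.map radiusRatio).prod / c.core

structure IsValid (r₀ : ℝ) : Prop where
  nested : c.pieces.Pairwise fun p q => q.2 ≤ p.1
  bounds : ∀ p ∈ c.pieces, 0 ≤ p.1 ∧ p.1 < p.2 ∧ p.2 < r₀ ∧ IsDyadic p.2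

-- The core ball is trimmed like an annulus: `(th, core)` is its part above the band.
noncomputable def cut (tl th : ℝ) : AnnulusChain :=
  ⟨c.annuli.flatMap (trimPiece tl th) ++ [(th, c.core)].filter (fun q => q.1 < q.2),
    min c.core tl⟩

def disc (ρ : ℝ) : AnnulusChain := ⟨[], ρ⟩

def piece (k : ℕ) : ℝ × ℝ := c.pieces.getD (k - 1) (0, 0)

@[simp] theorem length_pieces : c.pieces.length = c.annuli.length + 1 := by simp [pieces]

variable {c}

theorem IsValid.core_pos (hc : c.IsValid r₀) : 0 < c.core :=
  (hc.bounds (0, c.core) (by simp [pieces])).2.1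

theorem pieces_cut (hc : 0 < c.core) (htl : 0 < tl) (hth : tl ≤ th) :
    (c.cut tl th).pieces = c.pieces.flatMap (trimPiece tl th) := by
  simp only [pieces, cut, List.filter_cons, decide_eq_true_eq, List.filter_nil,
    List.append_assoc, List.flatMap_append, List.flatMap_cons, trimPiece,
    max_eq_right (htl.trans_le hth).le, lt_min hc htl, decide_true,
    List.flatMap_nil, List.append_nil, List.append_cancel_left_eq]
  split_ifs <;> rfl

theorem radii_cut (hc : 0 < c.core) (htl : 0 < tl) (hth : tl ≤ th) :
    (c.cut tl th).radii = c.radii \ Ico tl th := by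
  calc (c.cut tl th).radii = ⋃ p ∈ c.pieces, ⋃ q ∈ trimPiece tl th p, Ico q.1 q.2 := by
        ext x
        simp only [radii, pieces_cut hc htl hth, List.mem_flatMap, mem_iUnion, exists_prop]
        grind
    _ = c.radii \ Ico tl th := by simp only [biUnion_trimPiece, radii, iUnion_sdiff]

theorem IsValid.cut (hc : c.IsValid r₀) (htl : 0 < tl) (hth : tl ≤ th) (htld : IsDyadic tl) :
    (c.cut tl th).IsValid r₀ where
  nested := by
    rw [pieces_cut hc.core_pos htl hth, List.pairwise_flatMap]
    refine ⟨fun p _ => ?_, hc.nested.imp fun hpq x hx y hy => ?_⟩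
    · refine List.Pairwise.filter _ (List.pairwise_pair.2 ?_)
      exact (min_le_right _ _).trans (hth.trans (le_max_right _ _))
    · exact (le_of_mem_trimPiece hy).2.trans (hpq.trans (le_of_mem_trimPiece hx).1)
  bounds := by
    rw [pieces_cut hc.core_pos htl hth]
    intro q hq
    obtain ⟨p, hp, hqp⟩ := List.mem_flatMap.1 hq
    obtain ⟨h₀, -, hr, hd⟩ := hc.bounds p hp
    rcases mem_trimPiece.1 hqp with ⟨rfl | rfl, hq⟩
    · exact ⟨le_max_of_le_left h₀, hq, hr, hd⟩
    · exact ⟨h₀, hq, (min_le_left _ _).trans_lt hr, hd.min htld⟩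

theorem IsValid.length_pieces_cut_le (hc : c.IsValid r₀) (htl : 0 < tl) (hth : tl ≤ th) :
    (c.cut tl th).pieces.length ≤ c.pieces.length + 1 := by
  rw [pieces_cut hc.core_pos htl hth]
  exact length_flatMap_trimPiece_le hth hc.nested

theorem IsValid.radii_of_mem_annuli (hc : c.IsValid r₀) {p : ℝ × ℝ} (hp : p ∈ c.annuli) :
    0 ≤ p.1 ∧ p.1 < p.2 :=
  (hc.bounds p (List.mem_append_left _ hp)).imp_right And.left

theorem IsValid.weight_nonneg (hc : c.IsValid r₀) : 0 ≤ c.weight :=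
  div_nonneg (prod_radiusRatio_nonneg fun _ => hc.radii_of_mem_annuli) hc.core_pos.le

theorem IsValid.weight_cut_le (hc : c.IsValid r₀) (htl : 0 < tl) (hth : tl ≤ th) :
    (c.cut tl th).weight ≤ (th / tl) ^ c.pieces.length * c.weight := by
  have hann : ∀ p ∈ c.annuli, 0 ≤ p.1 ∧ p.1 < p.2 := fun _ => hc.radii_of_mem_annuli
  have hcore := hc.core_pos
  have h_core : (([(th, c.core)].filter fun q => q.1 < q.2).map radiusRatio).prod /
      min c.core tl ≤ th / tl / c.core := by
    by_cases h : th < c.core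
    · simp only [h, List.filter, decide_true, List.map, List.prod_cons, List.prod_nil, mul_one,
        radiusRatio, min_eq_right (hth.trans h.le)]
      exact (div_right_comm _ _ _).le
    · simp only [h, List.filter, decide_false, List.map_nil, List.prod_nil]
      rw [div_div, div_le_div_iff₀ (lt_min hcore htl) (by positivity), one_mul]
      rcases min_cases c.core tl with ⟨hm, -⟩ | ⟨hm, -⟩ <;> rw [hm] <;> nlinarith
  have h_core_nonneg : 0 ≤ (([(th, c.core)].filter fun q => q.1 < q.2).map radiusRatio).prod /
      min c.core tl := by
    refine div_nonneg (prod_radiusRatio_nonneg ?_) (lt_min hcore htl).le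
    simpa using fun h => ⟨(htl.trans_le hth).le, h⟩
  calc (c.cut tl th).weight = ((c.annuli.flatMap (trimPiece tl th)).map radiusRatio).prod *
        ((([(th, c.core)].filter fun q => q.1 < q.2).map radiusRatio).prod / min c.core tl) := by
        rw [weight, AnnulusChain.cut]
        simp only [List.map_append, List.prod_append, mul_div_assoc]
    _ ≤ ((th / tl) ^ c.annuli.length * (c.annuli.map radiusRatio).prod) * (th / tl / c.core) :=
        mul_le_mul (prod_radiusRatio_flatMap_trimPiece_le htl hth hann) h_core h_core_nonneg
          (mul_nonneg (pow_nonneg (div_nonneg (htl.trans_le hth).le htl.le) _)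
            (prod_radiusRatio_nonneg hann))
    _ = _ := by rw [weight, length_pieces, pow_succ]; ring

theorem IsValid.weight_cut_le_pow (hc : c.IsValid r₀) (htl : 0 < tl) {B : ℝ} (hB : 1 ≤ B)
    (hth : tl ≤ th) (hB' : th ≤ B * tl) {N : ℕ} (hN : c.pieces.length ≤ N) :
    (c.cut tl th).weight ≤ B ^ N * c.weight := by
  refine (hc.weight_cut_le htl hth).trans (mul_le_mul_of_nonneg_right ?_ hc.weight_nonneg)
  calc (th / tl) ^ c.pieces.length ≤ B ^ c.pieces.length :=
        pow_le_pow_left₀ (div_nonneg (htl.trans_le hth).le htl.le) ((div_le_iff₀ htl).2 hB') _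
    _ ≤ B ^ N := pow_le_pow_right₀ hB hN

theorem isValid_disc {ρ : ℝ} (hρ : 0 < ρ) (hρr₀ : ρ < r₀) (hρd : IsDyadic ρ) :
    (disc ρ).IsValid r₀ :=
  ⟨by simp [pieces, disc], by simpa [pieces, disc] using ⟨hρ, hρr₀, hρd⟩⟩

@[simp] theorem support_disc (w : ℂ) (ρ : ℝ) : (disc ρ).support w = Metric.ball w ρ := by
  ext x
  simp [support, radii, pieces, disc, dist_nonneg]

@[simp] theorem weight_disc (ρ : ℝ) : (disc ρ).weight = ρ⁻¹ := by
  simp [weight, disc]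

theorem support_cut_subset (hc : 0 < c.core) (htl : 0 < tl) (hth : tl ≤ th) (w : ℂ) :
    (c.cut tl th).support w ⊆ c.support w := by
  rw [support, support, radii_cut hc htl hth]
  exact preimage_mono sdiff_subset

theorem disjoint_ball_support_cut (hc : 0 < c.core) {w w' : ℂ} {ρ : ℝ} (hρ : 0 ≤ ρ)
    (htl : 0 < tl) (htl' : tl ≤ dist w w' - ρ) :
    Disjoint (Metric.ball w' ρ) ((c.cut tl (dist w w' + ρ)).support w) := by
  rw [support, radii_cut hc htl (by linarith)]
  refine Set.disjoint_left.2 fun x hx hx' => hx'.2 ⟨?_, ?_⟩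
  · rw [mem_ball] at hx
    linarith [dist_triangle w x w', dist_comm x w]
  · rw [mem_ball] at hx
    linarith [dist_triangle x w' w, dist_comm w' w]

variable {k k' : ℕ}

theorem piece_eq_getElem (hk : 1 ≤ k) (hk' : k ≤ c.pieces.length) :
    c.piece k = c.pieces[k - 1] :=
  List.getD_eq_getElem _ _ (by omega)

theorem piece_mem (hk : 1 ≤ k) (hk' : k ≤ c.pieces.length) : c.piece k ∈ c.pieces :=
  piece_eq_getElem hk hk' ▸ List.getElem_mem _

variable (c) in
theorem piece_length : c.piece c.pieces.length = (0, c.core) := by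
  simp [piece, pieces]

theorem IsValid.piece_snd_le_fst (hc : c.IsValid r₀) (hk : 1 ≤ k) (hkk' : k < k')
    (hk' : k' ≤ c.pieces.length) : (c.piece k').2 ≤ (c.piece k).1 := by
  rw [piece_eq_getElem hk (by omega), piece_eq_getElem (by omega) hk']
  exact List.pairwise_iff_getElem.1 hc.nested _ _ _ _ (by omega)

theorem IsValid.snd_piece_mem (hc : c.IsValid r₀) (hk : 1 ≤ k) (hk' : k ≤ c.pieces.length) :
    (c.piece k).2 ∈ Ioo 0 r₀ ∧ IsDyadic (c.piece k).2 :=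
  have h := hc.bounds _ (piece_mem hk hk')
  ⟨⟨h.1.trans_lt h.2.1, h.2.2.1⟩, h.2.2.2⟩

theorem IsValid.fst_piece_mem (hc : c.IsValid r₀) (hk : 1 ≤ k) (hk' : k < c.pieces.length) :
    (c.piece k).1 ∈ Ioo 0 r₀ ∧ (c.piece k).1 < (c.piece k).2 := by
  obtain ⟨-, h₁, h₂, -⟩ := hc.bounds _ (piece_mem hk hk'.le)
  obtain ⟨h₀', h₁', -⟩ := hc.bounds _ (piece_mem (k := k + 1) (by omega) hk')
  have hpos := (h₀'.trans_lt h₁').trans_le (hc.piece_snd_le_fst hk (lt_add_one k) hk')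
  exact ⟨⟨hpos, h₁.trans h₂⟩, h₁⟩

theorem IsValid.disjoint_piece (hc : c.IsValid r₀) (w : ℂ) (hk : 1 ≤ k) (hk' : k ≤ c.pieces.length)
    (hl : 1 ≤ k') (hl' : k' ≤ c.pieces.length) (hne : k ≠ k') :
    Disjoint (Metric.ball w (c.piece k).2 \ Metric.ball w (c.piece k).1)
      (Metric.ball w (c.piece k').2 \ Metric.ball w (c.piece k').1) := by
  wlog h : k < k' generalizing k k'
  · exact (this hl hl' hk hk' hne.symm (by omega)).symm
  rw [ball_sdiff_ball_eq_preimage, ball_sdiff_ball_eq_preimage]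
  refine (Set.Ico_disjoint_Ico.2 ?_).preimage _
  exact (min_le_right _ _).trans ((hc.piece_snd_le_fst hk h hl').trans (le_max_left _ _))

theorem ball_sdiff_ball_piece_subset_support (hk : 1 ≤ k) (hk' : k ≤ c.pieces.length) (w : ℂ) :
    Metric.ball w (c.piece k).2 \ Metric.ball w (c.piece k).1 ⊆ c.support w := by
  rw [ball_sdiff_ball_eq_preimage, support, radii]
  exact preimage_mono (subset_iUnion₂ (s := fun p _ => Ico p.1 p.2) _ (piece_mem hk hk'))

variable (c) in
theorem weight_eq_prod_piece : c.weight = (∏ k ∈ Icc 1 (c.pieces.length - 1), (c.piece k).1) /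
    ∏ k ∈ Icc 1 c.pieces.length, (c.piece k).2 := by
  have hfst : ∏ k ∈ Icc 1 c.annuli.length, (c.piece k).1 = (c.annuli.map Prod.fst).prod := by
    rw [← prod_Icc_getD c.annuli (0, 0)]
    refine Finset.prod_congr rfl fun k hk => ?_
    rw [piece, pieces, List.getD_append _ _ _ _ (by simp at hk; omega)]
  have hsnd : ∏ k ∈ Icc 1 c.pieces.length, (c.piece k).2 = (c.pieces.map Prod.snd).prod :=
    prod_Icc_getD _ _ _
  rw [weight, prod_map_radiusRatio, hsnd, length_pieces, Nat.add_sub_cancel, hfst]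
  simp [pieces, div_div]

end AnnulusChain

open AnnulusChain

def IsSeparating {ι : Type*} (r₀ : ℝ) (z : ι → ℂ) (s : Finset ι) (L : ι → AnnulusChain) : Prop :=
  (∀ i ∈ s, (L i).IsValid r₀ ∧ (L i).pieces.length ≤ #s) ∧
    (s : Set ι).PairwiseDisjoint fun i => (L i).support (z i)

namespace IsSeparating

variable {ι : Type*} [DecidableEq ι] {r₀ M ρ : ℝ} {z : ι → ℂ} {s : Finset ι}
  {L : ι → AnnulusChain}

theorem exists_insert (hL : IsSeparating r₀ z s L) {b : ι} (hb : b ∉ s) (hM : 1 ≤ M)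
    (hρ : 0 < ρ) (hρr₀ : ρ < r₀) (hρd : IsDyadic ρ)
    (hfar : ∀ i ∈ s, 2 * ρ ≤ dist (z i) (z b)) (hnear : ∀ i ∈ s, dist (z i) (z b) ≤ 2 * M) :
    ∃ L', IsSeparating r₀ z (insert b s) L' ∧
      ∏ i ∈ insert b s, (L' i).weight ≤ (6 * M) ^ (#s * #s) * ρ⁻¹ * ∏ i ∈ s, (L i).weight := by
  choose! tl htld htl₀ htl htl' using fun i hi => exists_dyadic_band hρ (hfar i hi) (hnear i hi) hM
  set L' := Function.update (fun i => (L i).cut (tl i) (dist (z i) (z b) + ρ)) b (disc ρ)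
  have hL'b : L' b = disc ρ := Function.update_self ..
  have hL's : ∀ i ∈ s, L' i = (L i).cut (tl i) (dist (z i) (z b) + ρ) := fun i hi =>
    Function.update_of_ne (ne_of_mem_of_not_mem hi hb) ..
  have hth : ∀ i ∈ s, tl i ≤ dist (z i) (z b) + ρ := fun i hi => by linarith [htl i hi]
  have hvalid : ∀ i ∈ s, (L' i).IsValid r₀ := fun i hi =>
    hL's i hi ▸ (hL.1 i hi).1.cut (htl₀ i hi) (hth i hi) (htld i hi)
  refine ⟨L', ⟨?_, ?_⟩, ?_⟩
  · intro i hi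
    rw [card_insert_of_notMem hb]
    rcases mem_insert.1 hi with rfl | hi
    · rw [hL'b]
      exact ⟨isValid_disc hρ hρr₀ hρd, by simp [disc, pieces]⟩
    · refine ⟨hvalid i hi, ?_⟩
      rw [hL's i hi]
      have := (hL.1 i hi).1.length_pieces_cut_le (htl₀ i hi) (hth i hi)
      have := (hL.1 i hi).2
      omega
  · rw [coe_insert]
    refine (hL.2.mono_on fun i hi => ?_).insert fun i hi hne => ?_
    · rw [hL's i hi]
      exact support_cut_subset (hL.1 i hi).1.core_pos (htl₀ i hi) (hth i hi) _
    · rw [hL'b, support_disc, hL's i hi]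
      exact disjoint_ball_support_cut (hL.1 i hi).1.core_pos hρ.le (htl₀ i hi) (htl i hi)
  · have hstep : ∀ i ∈ s, (L' i).weight ≤ (6 * M) ^ #s * (L i).weight := fun i hi =>
      hL's i hi ▸ (hL.1 i hi).1.weight_cut_le_pow (htl₀ i hi) (by linarith) (hth i hi)
        (htl' i hi) (hL.1 i hi).2
    calc ∏ i ∈ insert b s, (L' i).weight
        ≤ ρ⁻¹ * ∏ i ∈ s, (6 * M) ^ #s * (L i).weight := by
          rw [prod_insert hb, hL'b, weight_disc]
          exact mul_le_mul_of_nonneg_left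
            (prod_le_prod (fun i hi => (hvalid i hi).weight_nonneg) hstep) (by positivity)
      _ = (6 * M) ^ (#s * #s) * ρ⁻¹ * ∏ i ∈ s, (L i).weight := by
          rw [prod_mul_distrib, prod_const, ← pow_mul]
          ring

end IsSeparating

noncomputable def prevDist {n : ℕ} (z : Fin n → ℂ) (j : Fin n) : ℝ :=
  sInf (insert ‖z j‖ {d : ℝ | ∃ i, i < j ∧ d = ‖z j - z i‖})

section prevDist

variable {n : ℕ} (z : Fin n → ℂ)

theorem bddBelow_prevDist_set (j : Fin n) :
    BddBelow (insert ‖z j‖ {d : ℝ | ∃ i, i < j ∧ d = ‖z j - z i‖}) :=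
  ⟨0, by rintro _ (rfl | ⟨i, -, rfl⟩) <;> positivity⟩

theorem prevDist_le_norm (j : Fin n) : prevDist z j ≤ ‖z j‖ :=
  csInf_le (bddBelow_prevDist_set z j) (mem_insert _ _)

theorem prevDist_le_dist {i j : Fin n} (hij : i < j) : prevDist z j ≤ dist (z i) (z j) := by
  rw [dist_comm, dist_eq_norm]
  exact csInf_le (bddBelow_prevDist_set z j) (mem_insert_of_mem _ ⟨i, hij, rfl⟩)

variable {z}

theorem prevDist_pos (hz : Function.Injective z) (hz₀ : ∀ j, z j ≠ 0) (j : Fin n) :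
    0 < prevDist z j := by
  have hfin : (insert ‖z j‖ {d : ℝ | ∃ i, i < j ∧ d = ‖z j - z i‖}).Finite :=
    ((Set.finite_range fun i => ‖z j - z i‖).subset
      (by rintro _ ⟨i, -, rfl⟩; exact ⟨i, rfl⟩)).insert _
  obtain h | ⟨i, hij, h⟩ := (Set.insert_nonempty _ _).csInf_mem hfin <;> rw [prevDist, h]
  · exact norm_pos_iff.2 (hz₀ j)
  · exact norm_pos_iff.2 (sub_ne_zero.2 fun h => hij.ne' (hz h))

end prevDist

theorem exists_isSeparating_univ {n : ℕ} {r₀ M A : ℝ} (hM : 1 ≤ M)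
    (hρ : ∀ D, 0 < D → D ≤ M → ∃ ρ, IsDyadic ρ ∧ 0 < ρ ∧ ρ < r₀ ∧ 2 * ρ ≤ D ∧ D ≤ A * ρ)
    {z : Fin n → ℂ} (hz : Function.Injective z) (hzM : ∀ j, ‖z j‖ ≤ M) (hz₀ : ∀ j, z j ≠ 0) :
    ∃ L, IsSeparating r₀ z univ L ∧
      ∏ j, (L j).weight ≤ (A * (6 * M) ^ (n * n)) ^ n * ∏ j, (prevDist z j)⁻¹ := by
  suffices ∀ s : Finset (Fin n), ∃ L, IsSeparating r₀ z s L ∧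
      ∏ j ∈ s, (L j).weight ≤ (A * (6 * M) ^ (n * n)) ^ #s * ∏ j ∈ s, (prevDist z j)⁻¹ by
    simpa using this univ
  intro s
  induction s using Finset.induction_on_max with
  | empty => exact ⟨fun _ => disc 1, ⟨by simp, by simp⟩, by simp⟩
  | insert b s hlt ih =>
    obtain ⟨L, hL, hw⟩ := ih
    have hb : b ∉ s := fun h => lt_irrefl _ (hlt b h)
    have hD := prevDist_pos hz hz₀ b
    obtain ⟨ρ, hρd, hρ₀, hρr₀, hρD, hDρ⟩ := hρ _ hD ((prevDist_le_norm z b).trans (hzM b))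
    obtain ⟨L', hL', hw'⟩ := hL.exists_insert hb hM hρ₀ hρr₀ hρd
      (fun i hi => hρD.trans (prevDist_le_dist z (hlt i hi)))
      (fun i hi => (dist_le_norm_add_norm _ _).trans (by linarith [hzM i, hzM b]))
    have hρinv : ρ⁻¹ ≤ A * (prevDist z b)⁻¹ := by
      rw [← div_eq_mul_inv, le_div_iff₀ hD, inv_mul_le_iff₀ hρ₀, mul_comm]
      exact hDρ
    have hs : #s ≤ n := (card_le_univ s).trans_eq (Fintype.card_fin n)
    refine ⟨L', hL', hw'.trans ?_⟩
    calc (6 * M) ^ (#s * #s) * ρ⁻¹ * ∏ i ∈ s, (L i).weight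
        ≤ (6 * M) ^ (n * n) * (A * (prevDist z b)⁻¹) *
          ((A * (6 * M) ^ (n * n)) ^ #s * ∏ j ∈ s, (prevDist z j)⁻¹) := by
          gcongr
          · exact prod_nonneg fun i hi => (hL.1 i hi).1.weight_nonneg
          · exact mul_nonneg (by positivity) ((inv_nonneg.2 hρ₀.le).trans hρinv)
          · linarith
      _ = _ := by
          rw [card_insert_of_notMem hb, prod_insert hb]
          ring

theorem annuli_algorithm_general
    (n : ℕ) (r₀ : ℝ) (hr₀ : 0 < r₀)
    (K : Set ℂ) (hK : IsCompact K) (hKH : K ⊆ {w : ℂ | 0 < w.im}) :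
    ∃ C : ℝ, 0 < C ∧
      ∀ z : Fin n → ℂ, Function.Injective z → (∀ j, z j ∈ K) →
        ∃ (m : Fin n → ℕ) (s r : Fin n → ℕ → ℝ),
          (∀ j, 1 ≤ m j ∧ m j ≤ n) ∧
          (∀ j k, 1 ≤ k → k ≤ m j →
            r j k ∈ Set.Ioo 0 r₀ ∧ ∃ p : ℕ, r j k = (2 : ℝ)⁻¹ ^ p) ∧
          (∀ j k, 1 ≤ k → k ≤ m j - 1 → s j k ∈ Set.Ioo 0 r₀ ∧ s j k < r j k) ∧
          (∀ j, s j (m j) = 0) ∧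
          (∀ j k j' k', 1 ≤ k → k ≤ m j → 1 ≤ k' → k' ≤ m j' →
            ((j, k) : Fin n × ℕ) ≠ (j', k') →
            Disjoint (Metric.ball (z j) (r j k) \ Metric.ball (z j) (s j k))
              (Metric.ball (z j') (r j' k') \ Metric.ball (z j') (s j' k'))) ∧
          (∏ j, (∏ k ∈ Finset.Icc 1 (m j - 1), s j k) /
              (∏ k ∈ Finset.Icc 1 (m j), r j k)) ≤
            C * ∏ j, 1 / sInf (insert (‖z j‖)
              {d : ℝ | ∃ i, i < j ∧ d = ‖z j - z i‖}) := by
  obtain ⟨M, hM, hKM⟩ : ∃ M, 1 ≤ M ∧ ∀ w ∈ K, ‖w‖ ≤ M := by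
    obtain ⟨M, hM⟩ := hK.isBounded.exists_norm_le
    exact ⟨max M 1, le_max_right _ _, fun w hw => (hM w hw).trans (le_max_left _ _)⟩
  obtain ⟨A, hA, hρ⟩ := exists_dyadic_radius hr₀ hM
  refine ⟨(A * (6 * M) ^ (n * n)) ^ n, by positivity, fun z hz hzK => ?_⟩
  obtain ⟨L, hL, hweight⟩ := exists_isSeparating_univ hM hρ hz (fun j => hKM _ (hzK j))
    fun j h => by simpa [h] using hKH (hzK j)
  have hvalid j : (L j).IsValid r₀ := (hL.1 j (mem_univ j)).1
  refine ⟨fun j => (L j).pieces.length, fun j k => ((L j).piece k).1,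
    fun j k => ((L j).piece k).2, fun j => ⟨by simp, by simpa using (hL.1 j (mem_univ j)).2⟩,
    fun j k hk hk' => (hvalid j).snd_piece_mem hk hk',
    fun j k hk (hk' : k ≤ (L j).pieces.length - 1) => (hvalid j).fst_piece_mem hk (by omega),
    fun j => congrArg Prod.fst (piece_length (L j)), ?_, ?_⟩
  · intro j k j' k' hk hk' hl hl' hne
    rcases eq_or_ne j j' with rfl | hjj'
    · exact (hvalid j).disjoint_piece _ hk hk' hl hl' fun h => hne (h ▸ rfl)
    · exact (hL.2 (mem_univ j) (mem_univ j') hjj').mono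
        (ball_sdiff_ball_piece_subset_support hk hk' _)
        (ball_sdiff_ball_piece_subset_support hl hl' _)
  · simp_rw [← weight_eq_prod_piece, one_div]
    exact hweight

/-- **Separating annuli algorithm.**  Fix `n ∈ ℕ`, `r₀ > 0` and a compact set `K` in the
upper half-plane `ℍ`.  There is a constant `C = C(n, K, r₀) > 0` such that for any distinct
points `z 0, …, z (n-1) ∈ K` one can choose for each `j` a number `m j ∈ {1, …, n}` and
radii `s j k, r j k ∈ (0, r₀)` (with each `r j k` a negative power of `2`) satisfying
`0 < s j k < r j k` for `1 ≤ k ≤ m j - 1` and `s j (m j) = 0 < r j (m j)`, so that the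
annuli `B(z j, r j k) \ B(z j, s j k)` are pairwise disjoint and
`∏ⱼ (∏_{k=1}^{m j - 1} s j k) / (∏_{k=1}^{m j} r j k) ≤ C · ∏ⱼ 1 / minᵢ<ⱼ |z j - z i|`,
with the conventions that an empty product equals `1` and `z₀ = 0` (so that for the first
point the minimum is `|z 0 - 0|`). -/
theorem annuli_algorithm
    (n : ℕ) (hn : 0 < n) (r₀ : ℝ) (hr₀ : 0 < r₀)
    (K : Set ℂ) (hK : IsCompact K) (hKH : K ⊆ {w : ℂ | 0 < w.im}) :
    ∃ C : ℝ, 0 < C ∧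
      ∀ z : Fin n → ℂ, Function.Injective z → (∀ j, z j ∈ K) →
        ∃ (m : Fin n → ℕ) (s r : Fin n → ℕ → ℝ),
          (∀ j, 1 ≤ m j ∧ m j ≤ n) ∧
          (∀ j k, 1 ≤ k → k ≤ m j →
            r j k ∈ Set.Ioo 0 r₀ ∧ ∃ p : ℕ, r j k = (2 : ℝ)⁻¹ ^ p) ∧
          (∀ j k, 1 ≤ k → k ≤ m j - 1 → s j k ∈ Set.Ioo 0 r₀ ∧ s j k < r j k) ∧
          (∀ j, s j (m j) = 0) ∧
          (∀ j k j' k', 1 ≤ k → k ≤ m j → 1 ≤ k' → k' ≤ m j' →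
            ((j, k) : Fin n × ℕ) ≠ (j', k') →
            Disjoint (Metric.ball (z j) (r j k) \ Metric.ball (z j) (s j k))
              (Metric.ball (z j') (r j' k') \ Metric.ball (z j') (s j' k'))) ∧
          (∏ j, (∏ k ∈ Finset.Icc 1 (m j - 1), s j k) /
              (∏ k ∈ Finset.Icc 1 (m j), r j k)) ≤
            C * ∏ j, 1 / sInf (insert (‖z j‖)
              {d : ℝ | ∃ i, i < j ∧ d = ‖z j - z i‖}) :=
  annuli_algorithm_general n r₀ hr₀ K hK hKH
end
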